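/- Let T = (0,0,0,0,0,c₆,f₁,f₂,f₃,f₄,t₁,t₂) and T′ = (0,0,0,0,0,c₆,f₁′,f₂′,f₃′,f₄′,t₁′,t₂′) be tuples in ℤ¹² with c₁ = … = c₅ = 0 and the same value c₆ ≠ 0. Then T and T′ are ψ-equivalent if and only if: f₁ ≡ f₁′ (mod c₆); f₂ ≡ f₂′ (mod c₆); f₃ = f₃′; f₄ = f₄′; t₁ ≡ t₁′ (mod gcd(c₆,f₁,f₂,f₃,f₄)); and f₁f₂ + c₆t₂ ≡ f₁′f₂′ + c₆t₂′ (mod c₆·gcd(f₃,f₄)), where in the last congruence gcd(0,0) = 0 so that the congruence modulo 0 means equality. -/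

import Mathlib

/-- A 12-tuple of integers, with coordinates written `(c₁,…,c₆,f₁,…,f₄,t₁,t₂)`. -/
structure Tuple : Type where
  c1 : ℤ
  c2 : ℤ
  c3 : ℤ
  c4 : ℤ
  c5 : ℤ
  c6 : ℤ
  f1 : ℤ
  f2 : ℤ
  f3 : ℤ
  f4 : ℤ
  t1 : ℤ
  t2 : ℤ

/-- The move ψ₂₁ : f₃↦f₃+c₅, f₄↦f₄−c₁, t₁↦t₁+f₁. -/
def psi21 : Equiv.Perm Tuple where
  toFun x := { x with f3 := x.f3 + x.c5, f4 := x.f4 - x.c1, t1 := x.t1 + x.f1 }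
  invFun x := { x with f3 := x.f3 - x.c5, f4 := x.f4 + x.c1, t1 := x.t1 - x.f1 }
  left_inv x := by cases x; simp
  right_inv x := by cases x; simp

/-- The move ψ₄₁ : f₂↦f₂+c₆, f₃↦f₃−c₅, t₂↦t₂−f₁. -/
def psi41 : Equiv.Perm Tuple where
  toFun x := { x with f2 := x.f2 + x.c6, f3 := x.f3 - x.c5, t2 := x.t2 - x.f1 }
  invFun x := { x with f2 := x.f2 - x.c6, f3 := x.f3 + x.c5, t2 := x.t2 + x.f1 }
  left_inv x := by cases x; simp
  right_inv x := by cases x; simp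

/-- The move ψ₁₂ : f₃↦f₃−c₄, f₄↦f₄+c₂, t₁↦t₁+f₂. -/
def psi12 : Equiv.Perm Tuple where
  toFun x := { x with f3 := x.f3 - x.c4, f4 := x.f4 + x.c2, t1 := x.t1 + x.f2 }
  invFun x := { x with f3 := x.f3 + x.c4, f4 := x.f4 - x.c2, t1 := x.t1 - x.f2 }
  left_inv x := by cases x; simp
  right_inv x := by cases x; simp

/-- The move ψ₃₂ : f₁↦f₁+c₆, f₄↦f₄−c₂, t₂↦t₂−f₂. -/
def psi32 : Equiv.Perm Tuple where
  toFun x := { x with f1 := x.f1 + x.c6, f4 := x.f4 - x.c2, t2 := x.t2 - x.f2 }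
  invFun x := { x with f1 := x.f1 - x.c6, f4 := x.f4 + x.c2, t2 := x.t2 + x.f2 }
  left_inv x := by cases x; simp
  right_inv x := by cases x; simp

/-- The move ψ₄₃ : f₁↦f₁+c₅, f₂↦f₂−c₄, t₁↦t₁+f₃. -/
def psi43 : Equiv.Perm Tuple where
  toFun x := { x with f1 := x.f1 + x.c5, f2 := x.f2 - x.c4, t1 := x.t1 + x.f3 }
  invFun x := { x with f1 := x.f1 - x.c5, f2 := x.f2 + x.c4, t1 := x.t1 - x.f3 }
  left_inv x := by cases x; simp
  right_inv x := by cases x; simp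

/-- The move ψ₂₃ : f₁↦f₁−c₅, f₄↦f₄+c₃, t₂↦t₂−f₃. -/
def psi23 : Equiv.Perm Tuple where
  toFun x := { x with f1 := x.f1 - x.c5, f4 := x.f4 + x.c3, t2 := x.t2 - x.f3 }
  invFun x := { x with f1 := x.f1 + x.c5, f4 := x.f4 - x.c3, t2 := x.t2 + x.f3 }
  left_inv x := by cases x; simp
  right_inv x := by cases x; simp

/-- The move ψ₃₄ : f₁↦f₁−c₁, f₂↦f₂+c₂, t₁↦t₁+f₄. -/
def psi34 : Equiv.Perm Tuple where
  toFun x := { x with f1 := x.f1 - x.c1, f2 := x.f2 + x.c2, t1 := x.t1 + x.f4 }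
  invFun x := { x with f1 := x.f1 + x.c1, f2 := x.f2 - x.c2, t1 := x.t1 - x.f4 }
  left_inv x := by cases x; simp
  right_inv x := by cases x; simp

/-- The move ψ₁₄ : f₂↦f₂−c₂, f₃↦f₃+c₃, t₂↦t₂−f₄. -/
def psi14 : Equiv.Perm Tuple where
  toFun x := { x with f2 := x.f2 - x.c2, f3 := x.f3 + x.c3, t2 := x.t2 - x.f4 }
  invFun x := { x with f2 := x.f2 + x.c2, f3 := x.f3 - x.c3, t2 := x.t2 + x.f4 }
  left_inv x := by cases x; simp
  right_inv x := by cases x; simp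

/-- The list of the eight ψ-moves. -/
def psiMoves : List (Equiv.Perm Tuple) :=
  [psi21, psi41, psi12, psi32, psi43, psi23, psi34, psi14]

/-- Two tuples are ψ-equivalent if one is obtained from the other by a finite
composition of the eight ψ-moves and their inverses, i.e. they are related by the
equivalence relation generated by single applications of the moves. -/
def PsiEquiv : Tuple → Tuple → Prop :=
  Relation.EqvGen (fun x y => ∃ g ∈ psiMoves, g x = y)

/-!
On the slice `c₁ = ⋯ = c₅ = 0` every move is a translation: ψ₂₁, ψ₁₂, ψ₄₃, ψ₃₄ add
`f₁, f₂, f₃, f₄` to `t₁`; ψ₂₃, ψ₁₄ subtract `f₃, f₄` from `t₂`; and ψ₃₂, ψ₄₁ add `c₆` to `f₁`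
resp. `f₂` while subtracting `f₂` resp. `f₁` from `t₂`, which fixes `f₁f₂ + c₆t₂`. So the six
conditions are invariants of the moves.

Conversely, the translations of `t₁` realised by moves form a subgroup of `ℤ` containing
`f₁, …, f₄` and, through the commutator of ψ₃₂ and ψ₂₁, also `c₆`; so it contains every multiple
of `gcd(c₆, f₁, f₂, f₃, f₄)`. Likewise `t₂` can be translated by any multiple of `gcd(f₃, f₄)`.
One adjusts `t₁`, then moves `f₁` and `f₂` into place with ψ₃₂ and ψ₄₁, and finally the last
condition, divided by `c₆ ≠ 0`, says exactly that the remaining discrepancy in `t₂` is such a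
multiple.
-/

theorem Relation.EqvGen.apply_eq {α β : Type*} {r : α → α → Prop} {f : α → β}
    (hf : ∀ x y, r x y → f x = f y) {x y : α} (h : Relation.EqvGen r x y) : f x = f y :=
  (Setoid.ker f).iseqv.eqvGen_iff.mp (Relation.EqvGen.mono hf x y h)

theorem Int.emod_eq_emod_iff_dvd_sub {n a b : ℤ} : a % n = b % n ↔ n ∣ a - b :=
  Int.modEq_comm.trans Int.modEq_iff_dvd

theorem Int.gcd_gcd_add_mul_right (a b c k : ℤ) :
    Int.gcd a (Int.gcd (b + k * a) c) = Int.gcd a (Int.gcd b c) := by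
  rw [← Int.gcd_assoc, Int.gcd_add_mul_right_right, Int.gcd_assoc]

theorem Int.gcd_gcd_gcd_congr {a b b' c c' d : ℤ} (hb : a ∣ b - b') (hc : a ∣ c - c') :
    Int.gcd a (Int.gcd b (Int.gcd c d)) = Int.gcd a (Int.gcd b' (Int.gcd c' d)) := by
  obtain ⟨k, hk⟩ := hb
  obtain ⟨l, hl⟩ := hc
  rw [show b = b' + k * a by linarith, show c = c' + l * a by linarith,
    Int.gcd_gcd_add_mul_right, Int.gcd_left_comm b', Int.gcd_gcd_add_mul_right,
    Int.gcd_left_comm c']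

namespace AddSubgroup

theorem gcd_mem {S : AddSubgroup ℤ} {a b : ℤ} (ha : a ∈ S) (hb : b ∈ S) :
    (Int.gcd a b : ℤ) ∈ S := by
  rw [← zmultiples_le, ← Int.zmultiples_sup]
  exact sup_le (zmultiples_le.mpr ha) (zmultiples_le.mpr hb)

theorem mem_of_dvd {S : AddSubgroup ℤ} {a b : ℤ} (ha : a ∈ S) (hab : a ∣ b) : b ∈ S :=
  zmultiples_le.mpr ha (Int.mem_zmultiples_iff.mpr hab)

end AddSubgroup

def shiftSubgroup {α : Type*} {r : α → α → Prop} (hr : Equivalence r) (F : ℤ → α) :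
    AddSubgroup ℤ where
  carrier := {d | ∀ s, r (F s) (F (s + d))}
  zero_mem' s := by simpa using hr.refl (F s)
  add_mem' {a b} ha hb s := by simpa only [add_assoc] using hr.trans (ha s) (hb (s + a))
  neg_mem' {a} ha s := by simpa [sub_eq_add_neg] using hr.symm (ha (s - a))

theorem PsiEquiv.equivalence : Equivalence PsiEquiv := Relation.EqvGen.is_equivalence _

theorem PsiEquiv.symm {x y : Tuple} (h : PsiEquiv x y) : PsiEquiv y x :=
  PsiEquiv.equivalence.symm h

theorem PsiEquiv.trans {x y z : Tuple} (h : PsiEquiv x y) (h' : PsiEquiv y z) : PsiEquiv x z :=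
  PsiEquiv.equivalence.trans h h'

theorem PsiEquiv.of_move {g : Equiv.Perm Tuple} (hg : g ∈ psiMoves) {x y : Tuple}
    (h : g x = y) : PsiEquiv x y :=
  Relation.EqvGen.rel _ _ ⟨g, hg, h⟩

def sliceTuple (c6 f1 f2 f3 f4 t1 t2 : ℤ) : Tuple := ⟨0, 0, 0, 0, 0, c6, f1, f2, f3, f4, t1, t2⟩

section Slice

variable (c6 f1 f2 f3 f4 t1 t2 : ℤ)

@[simp] theorem psi21_sliceTuple :
    psi21 (sliceTuple c6 f1 f2 f3 f4 t1 t2) = sliceTuple c6 f1 f2 f3 f4 (t1 + f1) t2 := by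
  simp [psi21, sliceTuple]

@[simp] theorem psi41_sliceTuple :
    psi41 (sliceTuple c6 f1 f2 f3 f4 t1 t2) = sliceTuple c6 f1 (f2 + c6) f3 f4 t1 (t2 - f1) := by
  simp [psi41, sliceTuple]

@[simp] theorem psi12_sliceTuple :
    psi12 (sliceTuple c6 f1 f2 f3 f4 t1 t2) = sliceTuple c6 f1 f2 f3 f4 (t1 + f2) t2 := by
  simp [psi12, sliceTuple]

@[simp] theorem psi32_sliceTuple :
    psi32 (sliceTuple c6 f1 f2 f3 f4 t1 t2) = sliceTuple c6 (f1 + c6) f2 f3 f4 t1 (t2 - f2) := by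
  simp [psi32, sliceTuple]

@[simp] theorem psi43_sliceTuple :
    psi43 (sliceTuple c6 f1 f2 f3 f4 t1 t2) = sliceTuple c6 f1 f2 f3 f4 (t1 + f3) t2 := by
  simp [psi43, sliceTuple]

@[simp] theorem psi23_sliceTuple :
    psi23 (sliceTuple c6 f1 f2 f3 f4 t1 t2) = sliceTuple c6 f1 f2 f3 f4 t1 (t2 - f3) := by
  simp [psi23, sliceTuple]

@[simp] theorem psi34_sliceTuple :
    psi34 (sliceTuple c6 f1 f2 f3 f4 t1 t2) = sliceTuple c6 f1 f2 f3 f4 (t1 + f4) t2 := by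
  simp [psi34, sliceTuple]

@[simp] theorem psi14_sliceTuple :
    psi14 (sliceTuple c6 f1 f2 f3 f4 t1 t2) = sliceTuple c6 f1 f2 f3 f4 t1 (t2 - f4) := by
  simp [psi14, sliceTuple]

end Slice

-- `none` off the slice `c₁ = ⋯ = c₅ = 0`, which every move preserves.
def sliceInvariant (x : Tuple) : Option (ℤ × ℤ × ℤ × ℤ × ℤ × ℤ × ℤ) :=
  if x.c1 = 0 ∧ x.c2 = 0 ∧ x.c3 = 0 ∧ x.c4 = 0 ∧ x.c5 = 0 then
    some (x.c6, x.f1 % x.c6, x.f2 % x.c6, x.f3, x.f4,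
      x.t1 % Int.gcd x.c6 (Int.gcd x.f1 (Int.gcd x.f2 (Int.gcd x.f3 x.f4))),
      (x.f1 * x.f2 + x.c6 * x.t2) % (x.c6 * Int.gcd x.f3 x.f4))
  else none

theorem sliceInvariant_sliceTuple_eq_iff (c6 f1 f2 f3 f4 t1 t2 f1' f2' f3' f4' t1' t2' : ℤ) :
    sliceInvariant (sliceTuple c6 f1 f2 f3 f4 t1 t2) =
        sliceInvariant (sliceTuple c6 f1' f2' f3' f4' t1' t2') ↔
      (c6 ∣ f1 - f1' ∧ c6 ∣ f2 - f2' ∧ f3 = f3' ∧ f4 = f4' ∧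
        (Int.gcd c6 (Int.gcd f1 (Int.gcd f2 (Int.gcd f3 f4))) : ℤ) ∣ t1 - t1' ∧
        c6 * (Int.gcd f3 f4 : ℤ) ∣ (f1 * f2 + c6 * t2) - (f1' * f2' + c6 * t2')) := by
  simp only [sliceInvariant, sliceTuple, and_self, if_true, Option.some.injEq, Prod.mk.injEq,
    true_and]
  constructor
  · rintro ⟨h1, h2, rfl, rfl, ht1, ht2⟩
    rw [Int.emod_eq_emod_iff_dvd_sub] at h1 h2 ht2
    rw [← Int.gcd_gcd_gcd_congr h1 h2, Int.emod_eq_emod_iff_dvd_sub] at ht1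
    exact ⟨h1, h2, rfl, rfl, ht1, ht2⟩
  · rintro ⟨h1, h2, rfl, rfl, ht1, ht2⟩
    simp only [← Int.gcd_gcd_gcd_congr h1 h2, Int.emod_eq_emod_iff_dvd_sub]
    exact ⟨h1, h2, trivial, trivial, ht1, ht2⟩

section SliceInvariant

variable {c6 f1 f2 f3 f4 t1 t2 d : ℤ}

theorem sliceInvariant_sliceTuple_add_t1
    (hd : (Int.gcd c6 (Int.gcd f1 (Int.gcd f2 (Int.gcd f3 f4))) : ℤ) ∣ d) :
    sliceInvariant (sliceTuple c6 f1 f2 f3 f4 (t1 + d) t2) =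
      sliceInvariant (sliceTuple c6 f1 f2 f3 f4 t1 t2) := by
  rw [sliceInvariant_sliceTuple_eq_iff]
  simpa using hd

theorem sliceInvariant_sliceTuple_sub_t2 (hd : (Int.gcd f3 f4 : ℤ) ∣ d) :
    sliceInvariant (sliceTuple c6 f1 f2 f3 f4 t1 (t2 - d)) =
      sliceInvariant (sliceTuple c6 f1 f2 f3 f4 t1 t2) := by
  rw [sliceInvariant_sliceTuple_eq_iff]
  refine ⟨by simp, by simp, rfl, rfl, by simp, ?_⟩
  rw [show f1 * f2 + c6 * (t2 - d) - (f1 * f2 + c6 * t2) = -(c6 * d) by ring, dvd_neg]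
  exact mul_dvd_mul_left c6 hd

end SliceInvariant

theorem sliceInvariant_apply_move {g : Equiv.Perm Tuple} (hg : g ∈ psiMoves) (x : Tuple) :
    sliceInvariant (g x) = sliceInvariant x := by
  simp only [psiMoves, List.mem_cons, List.not_mem_nil, or_false] at hg
  by_cases hx : x.c1 = 0 ∧ x.c2 = 0 ∧ x.c3 = 0 ∧ x.c4 = 0 ∧ x.c5 = 0
  · obtain ⟨c1, c2, c3, c4, c5, c6, f1, f2, f3, f4, t1, t2⟩ := x
    obtain ⟨rfl, rfl, rfl, rfl, rfl⟩ := hx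
    change sliceInvariant (g (sliceTuple c6 f1 f2 f3 f4 t1 t2)) =
      sliceInvariant (sliceTuple c6 f1 f2 f3 f4 t1 t2)
    have hgcd := dvd_refl (Int.gcd c6 (Int.gcd f1 (Int.gcd f2 (Int.gcd f3 f4))) : ℤ)
    simp only [Int.dvd_coe_gcd_iff] at hgcd
    obtain ⟨-, hf1, hf2, hf3, hf4⟩ := hgcd
    rcases hg with rfl | rfl | rfl | rfl | rfl | rfl | rfl | rfl
    · rw [psi21_sliceTuple, sliceInvariant_sliceTuple_add_t1 hf1]
    · rw [psi41_sliceTuple, sliceInvariant_sliceTuple_eq_iff]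
      exact ⟨by simp, by simp, rfl, rfl, by simp, ⟨0, by ring⟩⟩
    · rw [psi12_sliceTuple, sliceInvariant_sliceTuple_add_t1 hf2]
    · rw [psi32_sliceTuple, sliceInvariant_sliceTuple_eq_iff]
      exact ⟨by simp, by simp, rfl, rfl, by simp, ⟨0, by ring⟩⟩
    · rw [psi43_sliceTuple, sliceInvariant_sliceTuple_add_t1 hf3]
    · rw [psi23_sliceTuple, sliceInvariant_sliceTuple_sub_t2 (Int.gcd_dvd_left f3 f4)]
    · rw [psi34_sliceTuple, sliceInvariant_sliceTuple_add_t1 hf4]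
    · rw [psi14_sliceTuple, sliceInvariant_sliceTuple_sub_t2 (Int.gcd_dvd_right f3 f4)]
  · rw [sliceInvariant, sliceInvariant, if_neg hx, if_neg]
    rcases hg with rfl | rfl | rfl | rfl | rfl | rfl | rfl | rfl <;> exact hx

theorem PsiEquiv.sliceInvariant_eq {x y : Tuple} (h : PsiEquiv x y) :
    sliceInvariant x = sliceInvariant y :=
  Relation.EqvGen.apply_eq (fun _ _ ⟨_, hg, hxy⟩ => hxy ▸ (sliceInvariant_apply_move hg _).symm) h

theorem mem_shiftSubgroup_of_move {F : ℤ → Tuple} {d : ℤ} {g : Equiv.Perm Tuple}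
    (hg : g ∈ psiMoves) (h : ∀ s, g (F s) = F (s + d)) :
    d ∈ shiftSubgroup PsiEquiv.equivalence F :=
  fun s => PsiEquiv.of_move hg (h s)

section SliceMoves

variable {c6 f1 f2 f3 f4 t1 t2 t1' t2' : ℤ}

theorem psiEquiv_sliceTuple_of_dvd_t1_sub
    (ht : (Int.gcd c6 (Int.gcd f1 (Int.gcd f2 (Int.gcd f3 f4))) : ℤ) ∣ t1 - t1') :
    PsiEquiv (sliceTuple c6 f1 f2 f3 f4 t1 t2) (sliceTuple c6 f1 f2 f3 f4 t1' t2) := by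
  set S := shiftSubgroup PsiEquiv.equivalence (fun s => sliceTuple c6 f1 f2 f3 f4 s t2)
  have hf1 : f1 ∈ S := mem_shiftSubgroup_of_move (g := psi21) (by simp [psiMoves]) fun s =>
    psi21_sliceTuple ..
  have hf2 : f2 ∈ S := mem_shiftSubgroup_of_move (g := psi12) (by simp [psiMoves]) fun s =>
    psi12_sliceTuple ..
  have hf3 : f3 ∈ S := mem_shiftSubgroup_of_move (g := psi43) (by simp [psiMoves]) fun s =>
    psi43_sliceTuple ..
  have hf4 : f4 ∈ S := mem_shiftSubgroup_of_move (g := psi34) (by simp [psiMoves]) fun s =>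
    psi34_sliceTuple ..
  -- the commutator of ψ₃₂ and ψ₂₁ shifts t₁ by c₆
  have hc6 : c6 ∈ S := fun s => by
    have e1 := PsiEquiv.of_move (g := psi32) (by simp [psiMoves])
      (psi32_sliceTuple c6 f1 f2 f3 f4 s t2)
    have e2 := PsiEquiv.of_move (g := psi21) (by simp [psiMoves])
      (psi21_sliceTuple c6 (f1 + c6) f2 f3 f4 s (t2 - f2))
    have e3 := PsiEquiv.of_move (g := psi32) (by simp [psiMoves])
      (psi32_sliceTuple c6 f1 f2 f3 f4 (s + c6 + f1) t2)
    have e4 := PsiEquiv.of_move (g := psi21) (by simp [psiMoves])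
      (psi21_sliceTuple c6 f1 f2 f3 f4 (s + c6) t2)
    rw [show s + (f1 + c6) = s + c6 + f1 by ring] at e2
    exact e1.trans (e2.trans (e3.symm.trans e4.symm))
  have hmem := S.mem_of_dvd (S.gcd_mem hc6 (S.gcd_mem hf1 (S.gcd_mem hf2 (S.gcd_mem hf3 hf4))))
    (dvd_sub_comm.mp ht)
  simpa using hmem t1

theorem psiEquiv_sliceTuple_of_dvd_t2_sub (ht : (Int.gcd f3 f4 : ℤ) ∣ t2 - t2') :
    PsiEquiv (sliceTuple c6 f1 f2 f3 f4 t1 t2) (sliceTuple c6 f1 f2 f3 f4 t1 t2') := by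
  set S := shiftSubgroup PsiEquiv.equivalence (fun s => sliceTuple c6 f1 f2 f3 f4 t1 s)
  have hf3 : -f3 ∈ S := mem_shiftSubgroup_of_move (g := psi23) (by simp [psiMoves]) fun s => by
    rw [psi23_sliceTuple, sub_eq_add_neg]
  have hf4 : -f4 ∈ S := mem_shiftSubgroup_of_move (g := psi14) (by simp [psiMoves]) fun s => by
    rw [psi14_sliceTuple, sub_eq_add_neg]
  have hmem := S.mem_of_dvd (S.gcd_mem (neg_mem_iff.mp hf3) (neg_mem_iff.mp hf4))
    (dvd_sub_comm.mp ht)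
  simpa using hmem t2

theorem psiEquiv_sliceTuple_sub_mul_f1 (n : ℤ) :
    PsiEquiv (sliceTuple c6 f1 f2 f3 f4 t1 t2)
      (sliceTuple c6 (f1 - n * c6) f2 f3 f4 t1 (t2 + n * f2)) := by
  set F := fun s => sliceTuple c6 (f1 - s * c6) f2 f3 f4 t1 (t2 + s * f2)
  have h1 : (-1 : ℤ) ∈ shiftSubgroup PsiEquiv.equivalence F :=
    mem_shiftSubgroup_of_move (g := psi32) (by simp [psiMoves]) fun s => by
      simp only [F, psi32_sliceTuple]
      congr 1 <;> ring
  simpa [F] using AddSubgroup.mem_of_dvd (neg_mem_iff.mp h1) (one_dvd n) 0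

theorem psiEquiv_sliceTuple_sub_mul_f2 (n : ℤ) :
    PsiEquiv (sliceTuple c6 f1 f2 f3 f4 t1 t2)
      (sliceTuple c6 f1 (f2 - n * c6) f3 f4 t1 (t2 + n * f1)) := by
  set F := fun s => sliceTuple c6 f1 (f2 - s * c6) f3 f4 t1 (t2 + s * f1)
  have h1 : (-1 : ℤ) ∈ shiftSubgroup PsiEquiv.equivalence F :=
    mem_shiftSubgroup_of_move (g := psi41) (by simp [psiMoves]) fun s => by
      simp only [F, psi41_sliceTuple]
      congr 1 <;> ring
  simpa [F] using AddSubgroup.mem_of_dvd (neg_mem_iff.mp h1) (one_dvd n) 0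

end SliceMoves

/-- Classification when c₁ = ⋯ = c₅ = 0 and c₆ ≠ 0: two such tuples are ψ-equivalent
iff f₁ ≡ f₁′ (mod c₆), f₂ ≡ f₂′ (mod c₆), f₃ = f₃′, f₄ = f₄′,
t₁ ≡ t₁′ (mod gcd(c₆,f₁,f₂,f₃,f₄)), and
f₁f₂+c₆t₂ ≡ f₁′f₂′+c₆t₂′ (mod c₆·gcd(f₃,f₄)) (congruence modulo 0 means equality). -/
theorem classification_c6_only (c6 f1 f2 f3 f4 t1 t2 f1' f2' f3' f4' t1' t2' : ℤ)
    (hc6 : c6 ≠ 0) :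
    PsiEquiv ⟨0, 0, 0, 0, 0, c6, f1, f2, f3, f4, t1, t2⟩
        ⟨0, 0, 0, 0, 0, c6, f1', f2', f3', f4', t1', t2'⟩ ↔
      (c6 ∣ f1 - f1' ∧
        c6 ∣ f2 - f2' ∧
        f3 = f3' ∧
        f4 = f4' ∧
        (Int.gcd c6 (Int.gcd f1 (Int.gcd f2 (Int.gcd f3 f4))) : ℤ) ∣ t1 - t1' ∧
        c6 * (Int.gcd f3 f4 : ℤ) ∣ (f1 * f2 + c6 * t2) - (f1' * f2' + c6 * t2')) := by
  refine ⟨fun h => (sliceInvariant_sliceTuple_eq_iff ..).mp h.sliceInvariant_eq, ?_⟩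
  rintro ⟨⟨m1, hm1⟩, ⟨m2, hm2⟩, rfl, rfl, ht1, ht2⟩
  obtain rfl : f1' = f1 - m1 * c6 := by linarith
  obtain rfl : f2' = f2 - m2 * c6 := by linarith
  have ht2' : (Int.gcd f3 f4 : ℤ) ∣ t2 + m1 * f2 + m2 * (f1 - m1 * c6) - t2' :=
    (mul_dvd_mul_iff_left hc6).mp (ht2.trans (dvd_of_eq (by ring)))
  exact (psiEquiv_sliceTuple_of_dvd_t1_sub ht1).trans ((psiEquiv_sliceTuple_sub_mul_f1 m1).trans
    ((psiEquiv_sliceTuple_sub_mul_f2 m2).trans (psiEquiv_sliceTuple_of_dvd_t2_sub ht2')))
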